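/- arXiv:0910.2736 — 3 statements merged into one kernel-verified Lean document; each statement's English description precedes it below -/
import Mathlib

section
/- Let a, b : ℕ → ℂ with b_i ≠ 0 for all i, and let A, B be the canonical numerators and denominators of the continued fraction K(a_n/b_n). Then for every n ∈ ℕ: B_{n+1} = (∏_{i=0}^{n} b_i) · Σ_{S ∈ Sp(1,n)} g^S and A_{n+1} = (∏_{i=0}^{n} b_i) · (a_0/b_0) · Σ_{S ∈ Sp(2,n)} g^S. -/
open Finset

/-- `Sp q m` is the collection of all sparse subsets of `{q, q+1, …, m}`
(sparse: any two distinct elements differ by at least 2). -/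
def Sp (q m : ℕ) : Finset (Finset ℕ) :=
  (Finset.Icc q m).powerset.filter (fun S => ∀ i ∈ S, ∀ j ∈ S, i < j → 2 ≤ j - i)

/-- `g a b i = a i / (b (i-1) * b i)`. -/
noncomputable def g (a b : ℕ → ℂ) (i : ℕ) : ℂ := a i / (b (i - 1) * b i)

/-- `gProd a b S = ∏ i ∈ S, g a b i` (the empty product is 1). -/
noncomputable def gProd (a b : ℕ → ℂ) (S : Finset ℕ) : ℂ := ∏ i ∈ S, g a b i

/-- Canonical numerators of the continued fraction `K (a n / b n)`. -/
noncomputable def contA (a b : ℕ → ℂ) : ℕ → ℂ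
  | 0 => 0
  | 1 => a 0
  | (n + 2) => b (n + 1) * contA a b (n + 1) + a (n + 1) * contA a b n

/-- Canonical denominators of the continued fraction `K (a n / b n)`. -/
noncomputable def contB (a b : ℕ → ℂ) : ℕ → ℂ
  | 0 => 1
  | 1 => b 0
  | (n + 2) => b (n + 1) * contB a b (n + 1) + a (n + 1) * contB a b n

/-! Splitting sparse subsets of `{q, …, m + 2}` according to whether they contain `m + 2` gives
`σ (m + 2) = σ (m + 1) + g (m + 2) * σ m` for `σ m = ∑ S ∈ Sp q m, gProd a b S`. Multiplied by
`∏ i ∈ range (m + 3), b i` this is the three-term recurrence shared by `contA` and `contB`, so the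
expansion follows by two-step induction from the initial values. -/

lemma mem_Sp {q m : ℕ} {S : Finset ℕ} :
    S ∈ Sp q m ↔ S ⊆ Icc q m ∧ ∀ i ∈ S, ∀ j ∈ S, i < j → 2 ≤ j - i := by
  simp [Sp]

lemma Sp_of_lt {q m : ℕ} (h : m < q) : Sp q m = {∅} := by
  ext S
  simp only [mem_Sp, Icc_eq_empty_of_lt h, subset_empty, mem_singleton]
  exact ⟨And.left, by rintro rfl; simp⟩

lemma Sp_self (q : ℕ) : Sp q q = {∅, {q}} := by
  ext S
  simp only [mem_Sp, Icc_self, subset_singleton_iff, mem_insert, mem_singleton]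
  constructor
  · exact And.left
  · rintro (rfl | rfl) <;> simp

lemma Sp_filter_notMem (q m : ℕ) : (Sp q (m + 1)).filter (m + 1 ∉ ·) = Sp q m := by
  ext S
  simp only [mem_filter, mem_Sp, subset_iff, mem_Icc]
  constructor
  · rintro ⟨⟨hsub, hsparse⟩, hm⟩
    exact ⟨fun i hi => ⟨(hsub hi).1, by grind⟩, hsparse⟩
  · rintro ⟨hsub, hsparse⟩
    exact ⟨⟨fun i hi => ⟨(hsub hi).1, by grind⟩, hsparse⟩, fun hm => by grind⟩

lemma Sp_filter_mem {q m : ℕ} (hq : q ≤ m + 2) :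
    (Sp q (m + 2)).filter (m + 2 ∈ ·) = (Sp q m).image (insert (m + 2)) := by
  ext S
  simp only [mem_filter, mem_image, mem_Sp, subset_iff, mem_Icc]
  constructor
  · rintro ⟨⟨hsub, hsparse⟩, hm⟩
    refine ⟨S.erase (m + 2), ⟨fun i hi => ?_, fun i hi j hj => ?_⟩, insert_erase hm⟩
    · rw [mem_erase] at hi
      have := hsparse i hi.2 (m + 2) hm
      grind
    · exact hsparse i (mem_of_mem_erase hi) j (mem_of_mem_erase hj)
  · rintro ⟨T, ⟨hsub, hsparse⟩, rfl⟩
    refine ⟨⟨fun i hi => ?_, fun i hi j hj => ?_⟩, mem_insert_self _ _⟩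
    · rw [mem_insert] at hi
      grind
    · rw [mem_insert] at hi hj
      grind

lemma sum_prod_Sp_add_two {R : Type*} [CommSemiring R] (f : ℕ → R) {q m : ℕ} (hq : q ≤ m + 2) :
    ∑ S ∈ Sp q (m + 2), ∏ i ∈ S, f i
      = ∑ S ∈ Sp q (m + 1), ∏ i ∈ S, f i + f (m + 2) * ∑ S ∈ Sp q m, ∏ i ∈ S, f i := by
  have hm : ∀ S ∈ Sp q m, m + 2 ∉ S := fun S hS hm => by
    have := (mem_Sp.1 hS).1 hm
    grind
  rw [← sum_filter_not_add_sum_filter _ (m + 2 ∈ ·), Sp_filter_notMem, Sp_filter_mem hq,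
    sum_image fun S hS T hT h => by
      rw [← erase_insert (hm S hS), ← erase_insert (hm T hT), h], mul_sum]
  exact congrArg _ (sum_congr rfl fun S hS => prod_insert (hm S hS))

lemma prod_mul_sum_gProd_Sp_add_two (a b : ℕ → ℂ) {q n : ℕ} (hb₁ : b (n + 1) ≠ 0)
    (hb₂ : b (n + 2) ≠ 0) (hq : q ≤ n + 2) :
    (∏ i ∈ range (n + 3), b i) * ∑ S ∈ Sp q (n + 2), gProd a b S
      = b (n + 2) * ((∏ i ∈ range (n + 2), b i) * ∑ S ∈ Sp q (n + 1), gProd a b S)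
        + a (n + 2) * ((∏ i ∈ range (n + 1), b i) * ∑ S ∈ Sp q n, gProd a b S) := by
  simp only [gProd]
  have hg : g a b (n + 2) = a (n + 2) / (b (n + 1) * b (n + 2)) := rfl
  rw [sum_prod_Sp_add_two _ hq, prod_range_succ _ (n + 2), prod_range_succ _ (n + 1), hg]
  field_simp

/-- Sparse-subset expansion of the canonical numerators and denominators of a
continued fraction. -/
theorem contA_contB_sparse_expansion (a b : ℕ → ℂ) (hb : ∀ i, b i ≠ 0) :
    ∀ n : ℕ,
      contB a b (n + 1) = (∏ i ∈ Finset.range (n + 1), b i) *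
        ∑ S ∈ Sp 1 n, gProd a b S ∧
      contA a b (n + 1) = (∏ i ∈ Finset.range (n + 1), b i) * (a 0 / b 0) *
        ∑ S ∈ Sp 2 n, gProd a b S := by
  intro n
  induction n using Nat.twoStepInduction with
  | zero =>
    rw [Sp_of_lt one_pos, Sp_of_lt two_pos]
    simp [contA, contB, gProd, mul_div_cancel₀ _ (hb 0)]
  | one =>
    simp only [contA, contB, gProd, g, Sp_self, Sp_of_lt one_lt_two, prod_range_succ,
      range_one, prod_singleton, prod_empty, sum_singleton, sum_insert, mem_singleton,
      empty_ne_singleton, not_false_eq_true, tsub_self, zero_add, mul_one, mul_zero, add_zero]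
    constructor <;> field_simp [hb 0, hb 1]
  | more n ih₁ ih₂ =>
    have step := fun q (hq : q ≤ n + 2) => prod_mul_sum_gProd_Sp_add_two a b (hb _) (hb _) hq
    constructor
    · rw [contB, ih₁.1, ih₂.1]
      exact (step 1 (by omega)).symm
    · rw [contA, ih₁.2, ih₂.2]
      linear_combination (a 0 / b 0) * (step 2 (by omega)).symm
end

section
/- Let c ∈ ℂ not be a nonpositive integer, let z ∈ ℂ, and let m ≥ 1 be a natural number. Then the family indexed by sparse finite subsets S of {m, m+1, m+2, …} given by S ↦ ∏_{i∈S} z/((c+i-1)·(c+i)) is summable, and its sum equals ₀F₁(c+m-1; z). In particular (m = 1), the sum over all sparse finite subsets of the positive integers equals ₀F₁(c; z), and (m = 2) the sum over sparse finite subsets of {2, 3, …} equals ₀F₁(c+1; z). -/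
/-!
Grading by cardinality, it suffices to show that the sparse `k`-subsets of `{n, n+1, …}`
contribute `T_k(c + n - 1) = z^k / ((c+n-1)_k k!)`, the `k`-th term of `₀F₁(c+n-1; z)`.
This goes by induction on `k`: removing the least element `n + t` of such a set leaves a sparse
`(k-1)`-subset of `{n+t+2, …}`, and the resulting sum over `t` telescopes because
`z / (x (x+1)) · T_{k-1}(x+2) = T_k(x) - T_k(x+1)`.
Absolute convergence comes from `∑ᵢ |wᵢ| < ∞` for `wᵢ = z / ((c+i-1)(c+i))`, since the sum over
all finite sets `S` of `∏_{i∈S} |wᵢ|` is bounded by `∏ᵢ (1 + |wᵢ|)`.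
-/

open Finset

/-- A finite set of naturals is *sparse* if any two distinct elements differ by at least 2. -/
def SparseSet (S : Finset ℕ) : Prop :=
  ∀ i ∈ S, ∀ j ∈ S, i < j → 2 ≤ j - i

/-- Pochhammer symbol `(c)_k = c (c+1) ⋯ (c+k-1)`, with `(c)_0 = 1`. -/
noncomputable def poch (c : ℂ) (k : ℕ) : ℂ := ∏ j ∈ Finset.range k, (c + j)

/-- The hypergeometric function `₀F₁(c; z) = ∑_{k=0}^∞ z^k / ((c)_k k!)`. -/
noncomputable def F01 (c z : ℂ) : ℂ := ∑' k : ℕ, z ^ k / (poch c k * (Nat.factorial k))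

open Filter Topology Asymptotics

theorem poch_succ (x : ℂ) (k : ℕ) : poch x (k + 1) = poch x k * (x + k) :=
  prod_range_succ _ _

theorem poch_succ' (x : ℂ) (k : ℕ) : poch x (k + 1) = x * poch (x + 1) k := by
  rw [poch, prod_range_succ']
  simp only [poch, Nat.cast_add, Nat.cast_one, Nat.cast_zero, add_zero]
  rw [mul_comm]
  congr 1
  exact prod_congr rfl fun j _ => by ring

theorem poch_ne_zero {x : ℂ} (hx : ∀ j : ℕ, x + j ≠ 0) (k : ℕ) : poch x k ≠ 0 :=
  prod_ne_zero_iff.2 fun j _ => hx j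

theorem tendsto_norm_add_natCast_atTop {𝕜 : Type*} [RCLike 𝕜] (x : 𝕜) :
    Tendsto (fun t : ℕ => ‖x + t‖) atTop atTop := by
  refine tendsto_atTop_mono (fun t => ?_)
    (tendsto_atTop_add_const_left _ (-‖x‖) tendsto_natCast_atTop_atTop)
  simpa [add_comm, sub_eq_neg_add] using norm_sub_norm_le (t : 𝕜) (-x)

theorem tendsto_norm_poch_add_natCast_atTop (x : ℂ) (k : ℕ) :
    Tendsto (fun t : ℕ => ‖poch (x + t) (k + 1)‖) atTop atTop := by
  induction k with
  | zero => simpa [poch] using tendsto_norm_add_natCast_atTop x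
  | succ k ih =>
    simp only [poch_succ _ (k + 1), norm_mul]
    refine ih.atTop_mul_atTop₀ ((tendsto_norm_add_natCast_atTop (x + (k + 1 : ℕ))).congr ?_)
    intro t
    ring_nf

noncomputable def f01Term (b z : ℂ) (k : ℕ) : ℂ := z ^ k / (poch b k * k.factorial)

theorem tendsto_f01Term_add_natCast_atTop (x z : ℂ) (k : ℕ) :
    Tendsto (fun t : ℕ => f01Term (x + t) z (k + 1)) atTop (𝓝 0) := by
  rw [tendsto_zero_iff_norm_tendsto_zero]
  simp only [f01Term, norm_div, norm_mul, norm_pow, Complex.norm_natCast]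
  exact tendsto_const_nhds.div_atTop
    ((tendsto_norm_poch_add_natCast_atTop x k).atTop_mul_const (by positivity))

theorem f01Term_sub_f01Term_add_one {x : ℂ} (hx : ∀ j : ℕ, x + j ≠ 0) (z : ℂ) (k : ℕ) :
    f01Term x z (k + 1) - f01Term (x + 1) z (k + 1) =
      z / (x * (x + 1)) * f01Term (x + 2) z k := by
  have hx1 : ∀ j : ℕ, x + 1 + j ≠ 0 := fun j => by convert hx (j + 1) using 1; push_cast; ring
  have hx2 : ∀ j : ℕ, x + 2 + j ≠ 0 := fun j => by convert hx (j + 2) using 1; push_cast; ring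
  have hrel : poch (x + 1) k * (x + 1 + k) = (x + 1) * poch (x + 2) k := by
    rw [← poch_succ, poch_succ', add_assoc, one_add_one_eq_two]
  have h0 : x ≠ 0 := by simpa using hx 0
  have h1 : x + 1 ≠ 0 := by simpa using hx 1
  have hu := poch_ne_zero hx1 k
  have hv := poch_ne_zero hx2 k
  have hk : (k : ℂ) + 1 ≠ 0 := Nat.cast_add_one_ne_zero k
  have hf : (k.factorial : ℂ) ≠ 0 := by exact_mod_cast k.factorial_ne_zero
  rw [f01Term, f01Term, f01Term, poch_succ (x + 1), hrel, poch_succ' x, Nat.factorial_succ]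
  push_cast
  field_simp
  linear_combination (-z ^ (k + 1)) * hrel

theorem hasSum_sub_add_one_of_tendsto {E : Type*} [AddCommGroup E] [TopologicalSpace E]
    [IsTopologicalAddGroup E] [T2Space E] {f : ℕ → E} (hs : Summable fun n => f n - f (n + 1))
    (hf : Tendsto f atTop (𝓝 0)) : HasSum (fun n => f n - f (n + 1)) (f 0) := by
  convert hs.hasSum
  refine tendsto_nhds_unique ?_ hs.hasSum.tendsto_sum_nat
  simp only [sum_range_sub']
  simpa using (tendsto_const_nhds (x := f 0)).sub hf

noncomputable def sparseWeight (c z : ℂ) (i : ℕ) : ℂ := z / ((c + i - 1) * (c + i))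

theorem isEquivalent_add_natCast {𝕜 : Type*} [RCLike 𝕜] (a : 𝕜) :
    (fun n : ℕ => a + n) ~[atTop] (fun n => (n : 𝕜)) := by
  refine (IsEquivalent.refl.add_isLittleO ?_).congr_left
    (Eventually.of_forall fun n => add_comm _ _)
  refine isLittleO_const_left.2 (Or.inr ?_)
  exact tendsto_natCast_atTop_atTop.congr fun n => by simp

theorem summable_norm_sparseWeight (c z : ℂ) : Summable fun i => ‖sparseWeight c z i‖ := by
  have hequiv : sparseWeight c z ~[atTop] fun n : ℕ => z / ((n : ℂ) * n) := by
    refine IsEquivalent.div IsEquivalent.refl (IsEquivalent.mul ?_ (isEquivalent_add_natCast c))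
    simpa [add_sub_right_comm] using isEquivalent_add_natCast (c - 1)
  refine summable_of_isBigO_nat ?_ hequiv.isBigO.norm_norm
  simpa [sq] using summable_pow_div_add z 2 0 one_lt_two

theorem SparseSet.subset {S T : Finset ℕ} (hT : SparseSet T) (h : S ⊆ T) : SparseSet S :=
  fun i hi j hj hij => hT i (h hi) j (h hj) hij

theorem SparseSet.insert {S : Finset ℕ} {a : ℕ} (hS : SparseSet S) (ha : ∀ i ∈ S, a + 2 ≤ i) :
    SparseSet (insert a S) := by
  intro i hi j hj hij
  rcases mem_insert.1 hi with rfl | hi' <;> rcases mem_insert.1 hj with rfl | hj'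
  · omega
  · have := ha j hj'; omega
  · have := ha i hi'; omega
  · exact hS i hi' j hj' hij

theorem SparseSet.min'_add_two_le {S : Finset ℕ} (hS : SparseSet S) (hne : S.Nonempty) :
    ∀ i ∈ S.erase (S.min' hne), S.min' hne + 2 ≤ i := by
  intro i hi
  have hlt : S.min' hne < i := S.min'_lt_of_mem_erase_min' hne hi
  have := hS _ (S.min'_mem hne) i (mem_of_mem_erase hi) hlt
  omega

def sparseOfCard (n k : ℕ) : Set (Finset ℕ) :=
  {S | S.card = k ∧ (∀ i ∈ S, n ≤ i) ∧ SparseSet S}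

def sigmaSparseOfCardEquiv (n : ℕ) :
    (Σ k, sparseOfCard n k) ≃ {S : Finset ℕ // (∀ i ∈ S, n ≤ i) ∧ SparseSet S} where
  toFun p := ⟨p.2, p.2.2.2⟩
  invFun S := ⟨S.1.card, S.1, rfl, S.2⟩
  left_inv := by rintro ⟨k, S, rfl, hS⟩; rfl
  right_inv _ := rfl

theorem insert_mem_sparseOfCard {n t k : ℕ} {S : Finset ℕ}
    (hS : S ∈ sparseOfCard (n + t + 2) k) :
    insert (n + t) S ∈ sparseOfCard n (k + 1) := by
  obtain ⟨hcard, hge, hsparse⟩ := hS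
  refine ⟨?_, ?_, hsparse.insert hge⟩
  · rw [card_insert_of_notMem fun h => by have := hge _ h; omega, hcard]
  · intro i hi
    rcases mem_insert.1 hi with rfl | hi
    · omega
    · have := hge i hi; omega

theorem erase_min'_mem_sparseOfCard {n k : ℕ} {S : Finset ℕ} (hS : S ∈ sparseOfCard n (k + 1))
    (hne : S.Nonempty) : S.erase (S.min' hne) ∈ sparseOfCard (n + (S.min' hne - n) + 2) k := by
  obtain ⟨hcard, hge, hsparse⟩ := hS
  have hmin : n + (S.min' hne - n) = S.min' hne := by have := hge _ (S.min'_mem hne); omega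
  refine ⟨?_, ?_, hsparse.subset (erase_subset _ _)⟩
  · rw [card_erase_of_mem (S.min'_mem hne), hcard, Nat.add_sub_cancel]
  · rw [hmin]
    exact hsparse.min'_add_two_le hne

def insertMinEquiv (n k : ℕ) : (Σ t, sparseOfCard (n + t + 2) k) ≃ sparseOfCard n (k + 1) where
  toFun p := ⟨insert (n + p.1) p.2, insert_mem_sparseOfCard p.2.2⟩
  invFun S :=
    have hne : S.1.Nonempty := card_pos.1 (by rw [S.2.1]; omega)
    ⟨S.1.min' hne - n, S.1.erase (S.1.min' hne), erase_min'_mem_sparseOfCard S.2 hne⟩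
  left_inv := by
    rintro ⟨t, S, hS⟩
    have hnotin : n + t ∉ S := fun h => by have := hS.2.1 _ h; omega
    have hmin : ∀ h, (insert (n + t) S).min' h = n + t := fun h =>
      le_antisymm (min'_le _ _ (mem_insert_self _ _)) <| le_min' _ _ _ fun i hi => by
        rcases mem_insert.1 hi with rfl | hi
        · exact le_rfl
        · have := hS.2.1 i hi; omega
    refine Sigma.subtype_ext ?_ ?_ <;> simp only [hmin]
    · omega
    · exact erase_insert hnotin
  right_inv := by
    rintro ⟨S, hS⟩
    apply Subtype.ext
    have hne : S.Nonempty := card_pos.1 (by rw [hS.1]; omega)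
    have : n + (S.min' hne - n) = S.min' hne := by have := hS.2.1 _ (S.min'_mem hne); omega
    simp only [this]
    exact insert_erase (S.min'_mem hne)

theorem summable_prod_sparseWeight (c z : ℂ) (p : Finset ℕ → Prop) :
    Summable fun S : {S // p S} => ∏ i ∈ S.1, sparseWeight c z i :=
  (summable_finsetProd_of_summable_norm (summable_norm_sparseWeight c z)).subtype {S | p S}

theorem hasSum_sparseOfCard {c : ℂ} (hc : ∀ j : ℕ, c + j ≠ 0) (z : ℂ) (k : ℕ) {n : ℕ}
    (hn : 1 ≤ n) :
    HasSum (fun S : sparseOfCard n k => ∏ i ∈ S.1, sparseWeight c z i)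
      (f01Term (c + n - 1) z k) := by
  induction k generalizing n with
  | zero =>
    have hempty : ∀ S : sparseOfCard n 0, S.1 = ∅ := fun S => card_eq_zero.1 S.2.1
    convert hasSum_single (⟨∅, rfl, by simp, by simp [SparseSet]⟩ : sparseOfCard n 0)
      fun S hS => (hS (Subtype.ext (hempty S))).elim
    simp [f01Term, poch]
  | succ k ih =>
    set x := c + n - 1
    have hx : ∀ t j : ℕ, x + t + j ≠ 0 := fun t j => by
      convert hc (n - 1 + t + j) using 1
      push_cast [Nat.cast_sub hn, x]
      ring
    set g : ℕ → ℂ := fun t => f01Term (x + t) z (k + 1)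
    have hfib (t : ℕ) : HasSum (fun S : sparseOfCard (n + t + 2) k =>
        ∏ i ∈ insert (n + t) S.1, sparseWeight c z i) (g t - g (t + 1)) := by
      have hnotin (S : sparseOfCard (n + t + 2) k) : n + t ∉ S.1 := fun h => by
        have := S.2.2.1 _ h; omega
      have hval : g t - g (t + 1) =
          sparseWeight c z (n + t) * f01Term (c + (n + t + 2 : ℕ) - 1) z k := by
        show f01Term (x + t) z (k + 1) - f01Term (x + (t + 1 : ℕ)) z (k + 1) = _
        rw [Nat.cast_succ, ← add_assoc, f01Term_sub_f01Term_add_one (hx t)]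
        congr 1
        · simp only [sparseWeight, x]
          push_cast
          ring_nf
        · congr 1
          push_cast [x]
          ring
      rw [hval]
      refine ((ih (by omega)).mul_left _).congr_fun fun S => ?_
      rw [prod_insert (hnotin S)]
    have hsum := (insertMinEquiv n k).summable_iff.2
      (summable_prod_sparseWeight c z (· ∈ sparseOfCard n (k + 1)))
    have htel : HasSum (fun t => g t - g (t + 1)) (g 0) :=
      hasSum_sub_add_one_of_tendsto (hsum.hasSum.sigma hfib).summable
        (tendsto_f01Term_add_natCast_atTop x z k)
    have hg0 : g 0 = f01Term x z (k + 1) := by simp only [g, Nat.cast_zero, add_zero]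
    rw [← hg0]
    exact (insertMinEquiv n k).hasSum_iff.1 (htel.sigma_of_hasSum hfib hsum)

/-- The sum over all sparse finite subsets `S` of `{m, m+1, m+2, …}` of
`∏_{i∈S} z/((c+i-1)(c+i))` equals `₀F₁(c+m-1; z)`. -/
theorem sparse_sum_eq_F01 (c z : ℂ) (hc : ∀ n : ℕ, c ≠ -(n : ℂ)) (m : ℕ) (hm : 1 ≤ m) :
    HasSum
      (fun S : {S : Finset ℕ // (∀ i ∈ S, m ≤ i) ∧ SparseSet S} =>
        ∏ i ∈ S.1, z / ((c + i - 1) * (c + i)))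
      (F01 (c + m - 1) z) := by
  have hc' : ∀ j : ℕ, c + j ≠ 0 := fun j h => hc j (eq_neg_of_add_eq_zero_left h)
  have hcard (k : ℕ) := hasSum_sparseOfCard hc' z k hm
  have hsum := (sigmaSparseOfCardEquiv m).summable_iff.2
    (summable_prod_sparseWeight c z fun S => (∀ i ∈ S, m ≤ i) ∧ SparseSet S)
  have hF01 : HasSum (f01Term (c + m - 1) z) (F01 (c + m - 1) z) :=
    (hsum.hasSum.sigma hcard).summable.hasSum
  exact (sigmaSparseOfCardEquiv m).hasSum_iff.1 (hF01.sigma_of_hasSum hcard hsum)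
end

section
/- Let q, z ∈ ℂ with |q| < 1. Define a, b : ℕ → ℂ by a_0 = 1, a_n = q^n·z for n ≥ 1, and b_n = 1 for all n, and let A, B be the canonical numerators and denominators of the continued fraction K(a_n/b_n) = 1/(1 + qz/(1 + q²z/(1 + ⋯))). Then B_n → Σ_{k=0}^∞ q^{k²}·z^k/(q)_k and A_n → Σ_{k=0}^∞ q^{k(k+1)}·z^k/(q)_k as n → ∞. -/
/-!
Both `B_n` and `A_{n+1}` satisfy `f (n + 2) = f (n + 1) + q^(n+1) w f n` with `f 0 = f 1 = 1`
(with `w = z` and `w = qz` respectively), and by the q-Pascal rule so do Schur's polynomials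
`∑_k q^{k²} w^k [n-k choose k]_q`. As `n → ∞` each Gaussian binomial `[n-k choose k]_q` tends to
`1/(q)_k` while staying below `(2/(1-|q|))^k`, so Tannery's theorem passes to the limit in the sum.
-/

open Finset Filter Topology

/-- q-Pochhammer symbol `(q)_k = ∏_{j=1}^k (1 - q^j)`, with `(q)_0 = 1`. -/
noncomputable def qPoch (q : ℂ) (k : ℕ) : ℂ := ∏ j ∈ Finset.range k, (1 - q ^ (j + 1))

section QBinomial

variable {q : ℂ}

lemma one_sub_pow_succ_ne_zero (hq : ‖q‖ < 1) (j : ℕ) : 1 - q ^ (j + 1) ≠ 0 := by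
  refine sub_ne_zero.2 fun h => (pow_lt_one₀ (norm_nonneg q) hq j.succ_ne_zero).ne ?_
  rw [← norm_pow, ← h, norm_one]

lemma qPoch_zero : qPoch q 0 = 1 := prod_range_zero _

lemma qPoch_succ (k : ℕ) : qPoch q (k + 1) = qPoch q k * (1 - q ^ (k + 1)) :=
  prod_range_succ _ _

lemma qPoch_ne_zero (hq : ‖q‖ < 1) (k : ℕ) : qPoch q k ≠ 0 :=
  prod_ne_zero_iff.2 fun j _ => one_sub_pow_succ_ne_zero hq j

lemma one_sub_norm_pow_le_norm_qPoch (hq : ‖q‖ ≤ 1) (k : ℕ) : (1 - ‖q‖) ^ k ≤ ‖qPoch q k‖ := by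
  rw [qPoch, norm_prod, pow_eq_prod_const]
  refine prod_le_prod (fun _ _ => sub_nonneg.2 hq) fun j _ => ?_
  calc 1 - ‖q‖ ≤ 1 - ‖q‖ ^ (j + 1) := by
        gcongr; exact pow_le_of_le_one (norm_nonneg q) hq j.succ_ne_zero
    _ = ‖(1 : ℂ)‖ - ‖q ^ (j + 1)‖ := by rw [norm_one, norm_pow]
    _ ≤ ‖1 - q ^ (j + 1)‖ := norm_sub_norm_le _ _

lemma norm_one_sub_pow_le_two (hq : ‖q‖ ≤ 1) (j : ℕ) : ‖1 - q ^ j‖ ≤ 2 :=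
  calc ‖1 - q ^ j‖ ≤ ‖(1 : ℂ)‖ + ‖q ^ j‖ := norm_sub_le _ _
    _ ≤ 1 + 1 := by rw [norm_one, norm_pow]; gcongr; exact pow_le_one₀ (norm_nonneg q) hq
    _ = 2 := one_add_one_eq_two

noncomputable def qBinom (q : ℂ) (n k : ℕ) : ℂ :=
  if k ≤ n then qPoch q n / (qPoch q k * qPoch q (n - k)) else 0

lemma qBinom_of_lt {n k : ℕ} (h : n < k) : qBinom q n k = 0 := if_neg h.not_ge

lemma qBinom_zero_right (hq : ‖q‖ < 1) (n : ℕ) : qBinom q n 0 = 1 := by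
  simp [qBinom, qPoch_zero, qPoch_ne_zero hq n]

lemma qBinom_self (hq : ‖q‖ < 1) (n : ℕ) : qBinom q n n = 1 := by
  simp [qBinom, qPoch_zero, qPoch_ne_zero hq n]

lemma qBinom_add_left (hq : ‖q‖ < 1) (d k : ℕ) :
    qBinom q (d + k) k = (∏ i ∈ range k, (1 - q ^ (d + i + 1))) / qPoch q k := by
  have hsplit : qPoch q (d + k) = qPoch q d * ∏ i ∈ range k, (1 - q ^ (d + i + 1)) :=
    prod_range_add _ d k
  rw [qBinom, if_pos (Nat.le_add_left k d), Nat.add_sub_cancel, hsplit, mul_comm (qPoch q k),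
    mul_div_mul_left _ _ (qPoch_ne_zero hq d)]

lemma qBinom_succ_succ (hq : ‖q‖ < 1) (j k : ℕ) :
    qBinom q (j + k + 1) (k + 1) = qBinom q (j + k) (k + 1) + q ^ j * qBinom q (j + k) k := by
  rcases j with _ | j
  · rw [zero_add, qBinom_self hq, qBinom_of_lt k.lt_succ_self, qBinom_self hq]
    ring
  · have e₁ : j + 1 + k + 1 - (k + 1) = j + 1 := by omega
    have e₂ : j + 1 + k - (k + 1) = j := by omega
    have e₃ : j + 1 + k - k = j + 1 := by omega
    rw [qBinom, qBinom, qBinom, if_pos (by omega), if_pos (by omega), if_pos (by omega), e₁, e₂, e₃,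
      qPoch_succ (j + 1 + k), qPoch_succ k, qPoch_succ j]
    have := qPoch_ne_zero hq (j + 1 + k)
    have := qPoch_ne_zero hq k
    have := qPoch_ne_zero hq j
    have := one_sub_pow_succ_ne_zero hq k
    have := one_sub_pow_succ_ne_zero hq j
    field_simp
    ring

lemma norm_qBinom_le (hq : ‖q‖ < 1) (n k : ℕ) : ‖qBinom q n k‖ ≤ (2 / (1 - ‖q‖)) ^ k := by
  rcases lt_or_ge n k with h | h
  · rw [qBinom_of_lt h, norm_zero]
    exact pow_nonneg (div_nonneg zero_le_two (sub_nonneg.2 hq.le)) k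
  obtain ⟨d, rfl⟩ := Nat.exists_eq_add_of_le' h
  rw [qBinom_add_left hq, norm_div, div_pow]
  refine div_le_div₀ (by positivity) ?_ (pow_pos (sub_pos.2 hq) k)
    (one_sub_norm_pow_le_norm_qPoch hq.le k)
  calc ‖∏ i ∈ range k, (1 - q ^ (d + i + 1))‖ ≤ ∏ i ∈ range k, ‖1 - q ^ (d + i + 1)‖ :=
        norm_prod_le _ _
    _ ≤ ∏ _i ∈ range k, (2 : ℝ) :=
        prod_le_prod (fun _ _ => norm_nonneg _) fun _ _ => norm_one_sub_pow_le_two hq.le _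
    _ = 2 ^ k := (pow_eq_prod_const 2 k).symm

lemma tendsto_qBinom_atTop (hq : ‖q‖ < 1) (k : ℕ) :
    Tendsto (fun n => qBinom q n k) atTop (𝓝 (qPoch q k)⁻¹) := by
  rw [← tendsto_add_atTop_iff_nat k]
  have hfactor (i : ℕ) : Tendsto (fun d => 1 - q ^ (d + i + 1)) atTop (𝓝 1) := by
    simpa using tendsto_const_nhds.sub <| (tendsto_pow_atTop_nhds_zero_of_norm_lt_one hq).comp <|
      tendsto_atTop_mono (fun d => by simp only [id]; omega) tendsto_id
  have hprod := (tendsto_finsetProd (range k) fun i _ => hfactor i).div_const (qPoch q k)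
  simpa [qBinom_add_left hq] using hprod

end QBinomial

lemma summable_pow_sq_mul_pow {r : ℝ} (hr : |r| < 1) (c : ℝ) :
    Summable fun k : ℕ => r ^ (k ^ 2) * c ^ k := by
  have hlim : Tendsto (fun k : ℕ => r ^ k * c) atTop (𝓝 0) := by
    simpa using (tendsto_pow_atTop_nhds_zero_of_abs_lt_one hr).mul_const c
  refine summable_geometric_two.of_norm_bounded_eventually_nat ?_
  filter_upwards [hlim.norm.eventually (ge_mem_nhds (by norm_num : ‖(0 : ℝ)‖ < 1 / 2))] with k hk
  rw [sq, pow_mul, ← mul_pow, norm_pow]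
  exact pow_le_pow_left₀ (norm_nonneg _) hk k

section Schur

variable {q w : ℂ}

noncomputable def schurTerm (q w : ℂ) (n k : ℕ) : ℂ := q ^ (k ^ 2) * w ^ k * qBinom q (n - k) k

noncomputable def schurPoly (q w : ℂ) (n : ℕ) : ℂ := ∑ k ∈ range (n + 1), schurTerm q w n k

lemma schurTerm_of_lt {n k : ℕ} (h : n < k) : schurTerm q w n k = 0 := by
  rw [schurTerm, qBinom_of_lt (by omega), mul_zero]

lemma schurTerm_zero_right (hq : ‖q‖ < 1) (n : ℕ) : schurTerm q w n 0 = 1 := by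
  simp [schurTerm, qBinom_zero_right hq]

lemma schurTerm_succ_succ (hq : ‖q‖ < 1) (n k : ℕ) :
    schurTerm q w (n + 2) (k + 1) =
      schurTerm q w (n + 1) (k + 1) + q ^ (n + 1) * w * schurTerm q w n k := by
  rcases le_or_gt (k + k) n with h | h
  · obtain ⟨j, rfl⟩ := Nat.exists_eq_add_of_le' h
    have e₁ : j + (k + k) + 2 - (k + 1) = j + k + 1 := by omega
    have e₂ : j + (k + k) + 1 - (k + 1) = j + k := by omega
    have e₃ : j + (k + k) - k = j + k := by omega
    rw [schurTerm, schurTerm, schurTerm, e₁, e₂, e₃, qBinom_succ_succ hq]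
    ring
  · simp only [schurTerm, qBinom_of_lt (show n + 2 - (k + 1) < k + 1 by omega),
      qBinom_of_lt (show n + 1 - (k + 1) < k + 1 by omega), qBinom_of_lt (show n - k < k by omega),
      mul_zero, add_zero]

lemma schurPoly_eq_sum_range {n N : ℕ} (h : n + 1 ≤ N) :
    schurPoly q w n = ∑ k ∈ range N, schurTerm q w n k :=
  sum_subset (range_subset_range.2 h) fun _ _ hk => schurTerm_of_lt (by simpa using hk)

lemma schurPoly_zero : schurPoly q w 0 = 1 := by
  simp [schurPoly, schurTerm, qBinom, qPoch_zero]

lemma schurPoly_one (hq : ‖q‖ < 1) : schurPoly q w 1 = 1 := by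
  rw [schurPoly, sum_range_succ, sum_range_one, schurTerm_zero_right hq, schurTerm, Nat.sub_self,
    qBinom_of_lt zero_lt_one, mul_zero, add_zero]

lemma schurPoly_succ_succ (hq : ‖q‖ < 1) (n : ℕ) :
    schurPoly q w (n + 2) = schurPoly q w (n + 1) + q ^ (n + 1) * w * schurPoly q w n := by
  rw [schurPoly_eq_sum_range (n := n + 2) le_rfl,
    schurPoly_eq_sum_range (n := n + 1) (N := n + 3) (by omega),
    schurPoly_eq_sum_range (n := n) (N := n + 2) (by omega),
    sum_range_succ', sum_range_succ' _ (n + 2)]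
  simp only [schurTerm_succ_succ hq, sum_add_distrib, mul_sum, schurTerm_zero_right hq]
  ring

lemma eq_schurPoly_of_recurrence (hq : ‖q‖ < 1) {f : ℕ → ℂ} (h₀ : f 0 = 1) (h₁ : f 1 = 1)
    (hrec : ∀ n, f (n + 2) = f (n + 1) + q ^ (n + 1) * w * f n) : f = schurPoly q w := by
  funext n
  induction n using Nat.twoStepInduction with
  | zero => rw [h₀, schurPoly_zero]
  | one => rw [h₁, schurPoly_one hq]
  | more n ih₀ ih₁ => rw [hrec, schurPoly_succ_succ hq, ih₀, ih₁]

lemma tendsto_schurPoly_atTop (hq : ‖q‖ < 1) (w : ℂ) :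
    Tendsto (schurPoly q w) atTop (𝓝 (∑' k : ℕ, q ^ (k ^ 2) * w ^ k / qPoch q k)) := by
  have hsum (n : ℕ) : schurPoly q w n = ∑' k, schurTerm q w n k :=
    (tsum_eq_sum fun _ hk => schurTerm_of_lt (by simpa using hk)).symm
  rw [funext hsum]
  simp only [div_eq_mul_inv]
  refine tendsto_tsum_of_dominated_convergence
    (summable_pow_sq_mul_pow (abs_norm q ▸ hq) (‖w‖ * (2 / (1 - ‖q‖))))
    (fun k => ((tendsto_qBinom_atTop hq k).comp (tendsto_sub_atTop_nat k)).const_mul _)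
    (Eventually.of_forall fun n k => ?_)
  rw [schurTerm, norm_mul, norm_mul, norm_pow, norm_pow, mul_pow, ← mul_assoc]
  exact mul_le_mul_of_nonneg_left (norm_qBinom_le hq _ _) (by positivity)

end Schur

/-- For the continued fraction `1/(1 + qz/(1 + q²z/(1 + ⋯)))`, the canonical
denominators converge to `∑ q^{k²} z^k/(q)_k` and the canonical numerators
converge to `∑ q^{k(k+1)} z^k/(q)_k`. -/
theorem rogers_ramanujan_numerators_denominators (q z : ℂ) (hq : ‖q‖ < 1)
    (a b : ℕ → ℂ) (ha0 : a 0 = 1) (ha : ∀ n : ℕ, 1 ≤ n → a n = q ^ n * z)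
    (hb : ∀ n : ℕ, b n = 1) :
    Tendsto (contB a b) atTop (𝓝 (∑' k : ℕ, q ^ (k ^ 2) * z ^ k / qPoch q k)) ∧
    Tendsto (contA a b) atTop (𝓝 (∑' k : ℕ, q ^ (k * (k + 1)) * z ^ k / qPoch q k)) := by
  have hB : contB a b = schurPoly q z :=
    eq_schurPoly_of_recurrence hq rfl (hb 0) fun n => by
      rw [contB, hb, ha (n + 1) n.succ_pos, one_mul]
  have hA : (fun n => contA a b (n + 1)) = schurPoly q (q * z) :=
    eq_schurPoly_of_recurrence hq ha0 (by simp [contA, hb, ha0]) fun n => by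
      rw [contA, hb, ha (n + 2) (by omega), one_mul]; ring
  refine ⟨hB ▸ tendsto_schurPoly_atTop hq z, ?_⟩
  rw [← tendsto_add_atTop_iff_nat 1, hA]
  convert tendsto_schurPoly_atTop hq (q * z) using 4 with k
  ring
end
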